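/- Let n ≥ 1 and 1 ≤ k ≤ n, and let κ = (κ_1,…,κ_n) ∈ Γ_k, where Γ_k = {λ ∈ ℝⁿ : σ_i(λ) > 0 for i = 1,…,k} is the Gårding cone. Then for every index i ∈ {1,…,n}, the partial derivative ∂σ_k/∂κ_i evaluated at κ is positive; equivalently, σ_{k−1} of the (n−1)-tuple obtained from κ by deleting the i-th entry is strictly positive. -/
import Mathlib

open Finset Polynomial

noncomputable section

/-- The `k`-th elementary symmetric polynomial of `κ : Fin n → ℝ`. -/
def esymm (n k : ℕ) (κ : Fin n → ℝ) : ℝ :=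
  ∑ s ∈ Finset.powersetCard k (Finset.univ : Finset (Fin n)), ∏ i ∈ s, κ i

/-- The elementary symmetric polynomial of degree `k` of the entries of `κ` indexed outside
of `i`, i.e. `∂σ_{k+1}/∂κ_i (κ) = σ_k(κ₁, …, κ_{i-1}, κ_{i+1}, …, κₙ)`. -/
def esymmDel (n k : ℕ) (κ : Fin n → ℝ) (i : Fin n) : ℝ :=
  ∑ s ∈ Finset.powersetCard k ((Finset.univ : Finset (Fin n)).erase i), ∏ j ∈ s, κ j

/-- Iterated derivative is additive. -/
lemma iter_deriv_add (m : ℕ) (p q : ℝ[X]) :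
    derivative^[m] (p + q) = derivative^[m] p + derivative^[m] q := by
  induction m generalizing p q with
  | zero => simp
  | succ m ih => simp [Function.iterate_succ_apply, derivative_add, ih]

/-- Leibniz rule for iterated derivatives of a linear factor times a polynomial. -/
lemma iter_deriv_linear_mul (c : ℝ) (q : ℝ[X]) (m : ℕ) :
    derivative^[m + 1] ((X + C c) * q) =
      (X + C c) * derivative^[m + 1] q + C ((m : ℝ) + 1) * derivative^[m] q := by
  induction m generalizing q with
  | zero =>
    simp only [zero_add, Function.iterate_one, Function.iterate_zero, id_eq,
      derivative_mul, derivative_X_add_C, one_mul]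
    push_cast
    simp only [map_add, map_one, map_zero]
    ring
  | succ m ih =>
    have h1 : derivative ((X + C c) * q) = q + (X + C c) * derivative q := by
      rw [derivative_mul, derivative_X_add_C]; ring
    have e1 : derivative^[m + 1] (derivative q) = derivative^[m + 1 + 1] q :=
      (Function.iterate_succ_apply _ _ _).symm
    have e2 : derivative^[m] (derivative q) = derivative^[m + 1] q :=
      (Function.iterate_succ_apply _ _ _).symm
    rw [Function.iterate_succ_apply, h1, iter_deriv_add, ih (derivative q), e1, e2]
    push_cast
    simp only [map_add, map_one, map_zero]
    ring

/-- A real-rooted polynomial with positive leading coefficient is positive beyond all of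
its roots, and so is its derivative. -/
lemma rr_eval_pos : ∀ (d : ℕ) (p : ℝ[X]), p.natDegree = d → p ≠ 0 →
    Multiset.card p.roots = p.natDegree → 0 < p.leadingCoeff →
    ∀ s : ℝ, (∀ r ∈ p.roots, r < s) →
    0 < p.eval s ∧ 0 ≤ (derivative p).eval s ∧
      (p.natDegree ≠ 0 → 0 < (derivative p).eval s) := by
  intro d
  induction d with
  | zero =>
    intro p hd hp0 _ hlc s _
    have hc : p = C (p.coeff 0) := p.eq_C_of_natDegree_eq_zero hd
    have hlc' : p.leadingCoeff = p.coeff 0 := by rw [leadingCoeff, hd]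
    refine ⟨?_, ?_, fun h => absurd hd h⟩
    · rw [hc]; simpa [hlc'] using hlc
    · rw [hc]; simp
  | succ d ih =>
    intro p hd hp0 hrr hlc s hs
    have hroots_ne : p.roots ≠ 0 := by
      intro h; rw [h] at hrr; simp [hd] at hrr
    obtain ⟨r, hr⟩ := Multiset.exists_mem_of_ne_zero hroots_ne
    have hroot : p.IsRoot r := (mem_roots hp0).1 hr
    set q := p / (X - C r) with hqdef
    have hfac : (X - C r) * q = p := mul_div_eq_iff_isRoot.2 hroot
    have hq0 : q ≠ 0 := by
      intro h; rw [h, mul_zero] at hfac; exact hp0 hfac.symm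
    have hXr : (X - C r : ℝ[X]) ≠ 0 := X_sub_C_ne_zero r
    have hrootsq : p.roots = {r} + q.roots := by
      rw [← hfac, roots_mul (hfac.symm ▸ hp0), roots_X_sub_C]
    have hdeg : p.natDegree = 1 + q.natDegree := by
      rw [← hfac, natDegree_mul hXr hq0, natDegree_X_sub_C]
    have hqdeg : q.natDegree = d := by omega
    have hqrr : Multiset.card q.roots = q.natDegree := by
      have := congrArg Multiset.card hrootsq
      simp only [Multiset.card_add, Multiset.card_singleton] at this
      omega
    have hqlc : 0 < q.leadingCoeff := by
      have : p.leadingCoeff = q.leadingCoeff := by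
        rw [← hfac, leadingCoeff_mul, (monic_X_sub_C r).leadingCoeff, one_mul]
      rwa [this] at hlc
    have hqs : ∀ r' ∈ q.roots, r' < s := by
      intro r' hr'
      exact hs r' (by rw [hrootsq]; exact Multiset.mem_add.2 (Or.inr hr'))
    obtain ⟨h1, h2, _⟩ := ih q hqdeg hq0 hqrr hqlc s hqs
    have hsr : 0 < s - r := sub_pos.2 (hs r hr)
    have hder : derivative p = q + (X - C r) * derivative q := by
      rw [← hfac, derivative_mul, derivative_X_sub_C, one_mul]
    have hevald : 0 < (derivative p).eval s := by
      rw [hder]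
      simp only [eval_add, eval_mul, eval_sub, eval_X, eval_C]
      have := mul_nonneg hsr.le h2
      linarith
    refine ⟨?_, hevald.le, fun _ => hevald⟩
    rw [← hfac]
    simp only [eval_mul, eval_sub, eval_X, eval_C]
    exact mul_pos hsr h1

/-- Iterated derivatives of a real-rooted polynomial are real-rooted, with the expected degree. -/
lemma rr_iter (p : ℝ[X]) (h : Multiset.card p.roots = p.natDegree) :
    ∀ m : ℕ, m ≤ p.natDegree →
    Multiset.card (derivative^[m] p).roots = (derivative^[m] p).natDegree ∧
      (derivative^[m] p).natDegree = p.natDegree - m := by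
  intro m
  induction m with
  | zero => intro _; simpa using h
  | succ m ih =>
    intro hm
    obtain ⟨h1, h2⟩ := ih (by omega)
    set q := derivative^[m] p with hq
    have hqd : 1 ≤ q.natDegree := by omega
    have c1 := q.card_roots_le_derivative
    have c2 := card_roots' (derivative q)
    have c3 := natDegree_derivative_le q
    rw [Function.iterate_succ_apply', ← hq]
    constructor <;> omega

lemma esymm_zero_eq_one (n : ℕ) (κ : Fin n → ℝ) : esymm n 0 κ = 1 := by
  simp [esymm]

lemma evalIterP_pos (n k : ℕ) (hk1 : 1 ≤ k) (hkn : k ≤ n) (κ : Fin n → ℝ)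
    (hκ : ∀ i, 1 ≤ i → i ≤ k → 0 < esymm n i κ) (s : ℝ) (hs : 0 ≤ s) :
    0 < (derivative^[n - k] (∏ j : Fin n, (X + C (κ j)))).eval s := by
  set P : ℝ[X] := ∏ j : Fin n, (X + C (κ j)) with hP
  have hPdeg : P.natDegree = n := by
    rw [hP, natDegree_prod _ _ fun j _ => X_add_C_ne_zero (κ j)]
    simp [natDegree_X_add_C]
  have hcard : (univ : Finset (Fin n)).card = n := by simp
  have hPcoeff : ∀ t : ℕ, t ≤ n → P.coeff t = esymm n (n - t) κ := by
    intro t ht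
    rw [hP, Finset.prod_X_add_C_coeff univ κ (by simpa [hcard] using ht), esymm, hcard]
  have hnonneg : ∀ j : ℕ, j ≤ k → 0 ≤ esymm n j κ := by
    intro j hj
    rcases Nat.eq_zero_or_pos j with h | h
    · simp [h, esymm_zero_eq_one]
    · exact (hκ j h hj).le
  set m := n - k with hm
  set w := derivative^[m] P with hw
  have hwcoeff : ∀ j, 0 ≤ w.coeff j := by
    intro j
    rw [hw, coeff_iterate_derivative, nsmul_eq_mul]
    rcases le_or_gt (j + m) n with h | h
    · rw [hPcoeff _ h]
      exact mul_nonneg (Nat.cast_nonneg _) (hnonneg _ (by omega))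
    · rw [coeff_eq_zero_of_natDegree_lt (by omega : P.natDegree < j + m)]
      simp
  have hc0 : 0 < w.coeff 0 := by
    rw [hw, coeff_iterate_derivative, nsmul_eq_mul, zero_add, hPcoeff m (by omega),
      (by omega : n - m = k)]
    refine mul_pos ?_ (hκ k hk1 le_rfl)
    have : m.descFactorial m ≠ 0 := by
      intro h
      have := Nat.descFactorial_eq_zero_iff_lt.1 h
      omega
    exact_mod_cast Nat.pos_of_ne_zero this
  rw [eval_eq_sum_range]
  have h0mem : 0 ∈ Finset.range (w.natDegree + 1) := Finset.mem_range.2 (Nat.succ_pos _)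
  calc (0:ℝ) < w.coeff 0 * s ^ 0 := by simpa using hc0
    _ ≤ ∑ j ∈ Finset.range (w.natDegree + 1), w.coeff j * s ^ j :=
      Finset.single_le_sum (fun j _ => mul_nonneg (hwcoeff j) (pow_nonneg hs j)) h0mem

/-- On the Gårding cone `Γ_k`, all partial derivatives of `σ_k` are positive:
`∂σ_k/∂κ_i (κ) = σ_{k-1}(κ with the i-th entry deleted) > 0`. -/
theorem esymm_deriv_pos_of_gardingCone (n k : ℕ) (hn : 1 ≤ n) (hk1 : 1 ≤ k) (hkn : k ≤ n)
    (κ : Fin n → ℝ) (hκ : ∀ i, 1 ≤ i → i ≤ k → 0 < esymm n i κ) :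
    ∀ i : Fin n, 0 < esymmDel n (k - 1) κ i := by
  intro i
  set E := (Finset.univ : Finset (Fin n)).erase i with hE
  have hEcard : E.card = n - 1 := by
    rw [hE, card_erase_of_mem (mem_univ i)]
    simp
  set Q : ℝ[X] := ∏ j ∈ E, (X + C (κ j)) with hQ
  have hQne : ∀ j ∈ E, (X + C (κ j)) ≠ (0:ℝ[X]) := fun j _ => X_add_C_ne_zero _
  have hQdeg : Q.natDegree = n - 1 := by
    rw [hQ, natDegree_prod _ _ hQne]
    simp [natDegree_X_add_C, hEcard]
  have hQ0 : Q ≠ 0 := by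
    rw [hQ]; exact Finset.prod_ne_zero_iff.2 hQne
  have hQmonic : Q.Monic := monic_prod_of_monic _ _ fun j _ => monic_X_add_C _
  have hroots_single : ∀ j : Fin n, (X + C (κ j) : ℝ[X]).roots = {-κ j} := by
    intro j
    rw [show (X + C (κ j) : ℝ[X]) = X - C (-κ j) by rw [map_neg, sub_neg_eq_add]]
    exact roots_X_sub_C _
  have hQroots : Multiset.card Q.roots = n - 1 := by
    rw [hQ, roots_prod _ _ (hQ ▸ hQ0), Multiset.card_bind]
    simp only [Function.comp, hroots_single, Multiset.card_singleton]
    rw [Multiset.map_const', Multiset.sum_replicate, smul_eq_mul, mul_one]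
    exact hEcard
  have hQrr : Multiset.card Q.roots = Q.natDegree := by rw [hQroots, hQdeg]
  obtain ⟨m, hm⟩ : ∃ m, m = n - k := ⟨n - k, rfl⟩
  have hmle : m ≤ n - 1 := by omega
  obtain ⟨hvrr, hvdeg⟩ := rr_iter Q hQrr m (by omega)
  set v := derivative^[m] Q with hv
  have hvdeg' : v.natDegree = k - 1 := by rw [hvdeg, hQdeg]; omega
  have hdesc : ((n-1).descFactorial m : ℝ) > 0 := by
    have : (n-1).descFactorial m ≠ 0 := fun h => by
      have := Nat.descFactorial_eq_zero_iff_lt.1 h; omega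
    exact_mod_cast Nat.pos_of_ne_zero this
  have hvlc : 0 < v.leadingCoeff := by
    have hQtop : Q.coeff (k - 1 + m) = 1 := by
      rw [(by omega : k - 1 + m = n - 1), ← hQdeg, ← leadingCoeff, hQmonic.leadingCoeff]
    rw [leadingCoeff, hvdeg', hv, coeff_iterate_derivative, nsmul_eq_mul, hQtop, mul_one,
      (by omega : k - 1 + m = n - 1)]
    exact hdesc
  have hv0 : v ≠ 0 := fun h => by rw [h] at hvlc; simp at hvlc
  have hfacP : (∏ j : Fin n, (X + C (κ j))) = (X + C (κ i)) * Q := by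
    rw [hQ, hE]
    exact (Finset.mul_prod_erase univ _ (mem_univ i)).symm
  have hroots : ∀ r ∈ v.roots, r < 0 := by
    by_contra hcon
    push_neg at hcon
    obtain ⟨r0, hr0, hr0'⟩ := hcon
    have hne : v.roots.toFinset.Nonempty := ⟨r0, Multiset.mem_toFinset.2 hr0⟩
    set s := v.roots.toFinset.max' hne with hsdef
    have hs_mem : s ∈ v.roots := Multiset.mem_toFinset.1 (v.roots.toFinset.max'_mem hne)
    have hs_max : ∀ r' ∈ v.roots, r' ≤ s := fun r' h' =>
      Finset.le_max' _ _ (Multiset.mem_toFinset.2 h')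
    have hs0 : (0:ℝ) ≤ s := le_trans hr0' (hs_max r0 hr0)
    have hvs : v.eval s = 0 := (mem_roots hv0).1 hs_mem
    have hPpos := evalIterP_pos n k hk1 hkn κ hκ s hs0
    rw [hfacP, ← hm] at hPpos
    rcases Nat.eq_zero_or_pos m with hm0 | hmpos
    · rw [hm0] at hPpos
      rw [hm0] at hv
      simp only [Function.iterate_zero, id_eq] at hPpos hv
      rw [hv] at hvs
      rw [eval_mul, hvs, mul_zero] at hPpos
      exact lt_irrefl 0 hPpos
    · obtain ⟨m', rfl⟩ : ∃ m', m = m' + 1 := ⟨m - 1, by omega⟩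
      set u := derivative^[m'] Q with hu
      have hidQ : derivative^[m' + 1] ((X + C (κ i)) * Q) =
          (X + C (κ i)) * v + C ((m' : ℝ) + 1) * u := by
        rw [iter_deriv_linear_mul, hv, hu]
      rw [hidQ] at hPpos
      simp only [eval_add, eval_mul, eval_C, hvs, mul_zero, zero_add] at hPpos
      have hues : 0 < u.eval s := by
        by_contra h
        push_neg at h
        have hc : (0:ℝ) < (m' : ℝ) + 1 := by positivity
        nlinarith
      obtain ⟨hurr, hudeg⟩ := rr_iter Q hQrr m' (by omega)
      rw [← hu] at hurr hudeg
      have hudeg' : u.natDegree = k := by rw [hudeg, hQdeg]; omega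
      have hulc : 0 < u.leadingCoeff := by
        have hQtop : Q.coeff (k + m') = 1 := by
          rw [(by omega : k + m' = n - 1), ← hQdeg, ← leadingCoeff, hQmonic.leadingCoeff]
        have hd : ((n-1).descFactorial m' : ℝ) > 0 := by
          have : (n-1).descFactorial m' ≠ 0 := fun h => by
            have := Nat.descFactorial_eq_zero_iff_lt.1 h; omega
          exact_mod_cast Nat.pos_of_ne_zero this
        rw [leadingCoeff, hudeg', hu, coeff_iterate_derivative, nsmul_eq_mul, hQtop, mul_one,
          (by omega : k + m' = n - 1)]
        exact hd
      have hu0 : u ≠ 0 := fun h => by rw [h] at hulc; simp at hulc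
      have hderu : derivative u = v := by
        rw [hu, hv]
        exact (Function.iterate_succ_apply' _ _ _).symm
      -- v is positive beyond s
      have hvpos : ∀ x : ℝ, s < x → 0 < v.eval x := by
        intro x hx
        exact (rr_eval_pos v.natDegree v rfl hv0 hvrr hvlc x
          (fun r hr => lt_of_le_of_lt (hs_max r hr) hx)).1
      -- u is strictly monotone on [s, ∞)
      have hmono : StrictMonoOn (fun x => u.eval x) (Set.Ici s) := by
        apply strictMonoOn_of_deriv_pos (convex_Ici s)
          ((Polynomial.continuous u).continuousOn)
        intro x hx
        rw [interior_Ici] at hx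
        rw [Polynomial.deriv, hderu]
        exact hvpos x hx
      have huroots : ∀ r ∈ u.roots, r < s := by
        intro r hr
        have hre : u.eval r = 0 := (mem_roots hu0).1 hr
        by_contra hrs
        push_neg at hrs
        rcases eq_or_lt_of_le hrs with h | h
        · rw [h] at hues; rw [hre] at hues; exact lt_irrefl 0 hues
        · have hlt := hmono (Set.mem_Ici.2 le_rfl) (Set.mem_Ici.2 h.le) h
          simp only [hre] at hlt
          linarith
      obtain ⟨-, -, h3⟩ := rr_eval_pos u.natDegree u rfl hu0 hurr hulc s huroots
      have := h3 (by omega : u.natDegree ≠ 0)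
      rw [hderu, hvs] at this
      exact lt_irrefl 0 this
  obtain ⟨hpos, -, -⟩ := rr_eval_pos v.natDegree v rfl hv0 hvrr hvlc 0 hroots
  have hev : v.eval 0 = ((m.descFactorial m : ℝ)) * Q.coeff m := by
    rw [← coeff_zero_eq_eval_zero, hv, coeff_iterate_derivative, nsmul_eq_mul, zero_add]
  have hQm : Q.coeff m = esymmDel n (k - 1) κ i := by
    have h := Finset.prod_X_add_C_coeff E κ (show m ≤ E.card by omega)
    rw [hEcard, (by omega : n - 1 - m = k - 1)] at h
    rw [← hQ] at h
    rw [h, esymmDel, hE]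
  have hfacpos : (0:ℝ) < (m.descFactorial m : ℝ) := by
    have : m.descFactorial m ≠ 0 := fun h => by
      have := Nat.descFactorial_eq_zero_iff_lt.1 h; omega
    exact_mod_cast Nat.pos_of_ne_zero this
  rw [hev, hQm] at hpos
  by_contra hcontra
  push_neg at hcontra
  nlinarith

end
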